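/- arXiv:1810.06833 — 2 statements merged into one kernel-verified Lean document; each statement's English description precedes it below -/
import Mathlib

section
/- (Theorem 1, guarantee of the LDGM greedy iteration) Let E ⊆ ℝ^n be a finite nonempty set of nonnegative vectors, P = conv(E), l a positive integer, 𝓔 = {(1/l)·x : x ∈ Frontier(E)}, and m = |Frontier(E)|. Let 0 < β ≤ 1 and let f : ℝ^n → ℝ satisfy f(0) = 0, be monotone on the nonnegative orthant, and have DR-submodularity ratio at least β. Assume L ≥ 0 satisfies |f(x) − f(y)| ≤ L·‖x − y‖ for all x, y ∈ Frontier(P); assume D ≥ 0 satisfies ‖x‖ ≤ D for all x ∈ P; and assume x* ∈ Frontier(P) satisfies f(x*) ≥ f(y) for all y ∈ P. Define the greedy sequence x_0 = 0 and, for each 0 ≤ t < l, x_{t+1} = x_t + e_t where e_t ∈ 𝓔 satisfies f(x_t + e_t) ≥ f(x_t + e) for all e ∈ 𝓔. Then f(x_l) ≥ (1 − e^{−β})·f(x*) − (1 − e^{−β})·m·D·L/l. -/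
/-
Carathéodory writes `x*` as a convex combination `∑ wᵢ vᵢ` of finitely many points of `E` with
positive weights. The frontier of a convex set is an extreme subset, so every convex combination of
the `vᵢ` lies on the frontier of `P`; in particular each `vᵢ` lies on the frontier of `E`, and so
does the grid point `y = ∑ (kᵢ / l) vᵢ` obtained by rounding the `l wᵢ` to integers `kᵢ` with
`∑ kᵢ = l`. As `‖x* - y‖ ≤ m D / l`, the Lipschitz bound gives `f y ≥ f x* - m D L / l`.
The point `y` is a sum of `l` elements of `𝓔`, so the DR-submodularity ratio turns the greedy choice
into `f y - f x_{t+1} ≤ (1 - β / l) (f y - f x_t)`, and `(1 - β / l) ^ l ≤ exp (-β)`.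
-/

/-- The set of maximal elements of `S` for the coordinatewise partial order. -/
def maxFrontier {n : ℕ} (S : Set (Fin n → ℝ)) : Set (Fin n → ℝ) :=
  {x | x ∈ S ∧ ¬ ∃ y ∈ S, x ≤ y ∧ x ≠ y}

/-- Euclidean norm on `Fin n → ℝ`. -/
noncomputable def euclidNorm {n : ℕ} (x : Fin n → ℝ) : ℝ :=
  Real.sqrt (∑ i, (x i) ^ 2)

def HasDRSubmodularityRatio {ι : Type*} [DecidableEq ι] (f : (ι → ℝ) → ℝ) (β : ℝ) : Prop :=
  ∀ x y : ι → ℝ, 0 ≤ x → x ≤ y → ∀ k : ℝ, 0 ≤ k → ∀ i : ι,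
    f (x + k • (Pi.single i 1 : ι → ℝ)) - f x ≥ β * (f (y + k • (Pi.single i 1 : ι → ℝ)) - f y)

namespace HasDRSubmodularityRatio

variable {ι : Type*} [DecidableEq ι] [Fintype ι] {f : (ι → ℝ) → ℝ} {β : ℝ}

theorem mul_sub_le_sub (hf : HasDRSubmodularityRatio f β) {a b w : ι → ℝ} (ha : 0 ≤ a)
    (hab : a ≤ b) (hw : 0 ≤ w) : β * (f (b + w) - f b) ≤ f (a + w) - f a := by
  have key : ∀ s : Finset ι, β * (f (b + ∑ i ∈ s, Pi.single i (w i)) - f b)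
      ≤ f (a + ∑ i ∈ s, Pi.single i (w i)) - f a := by
    intro s
    induction s using Finset.induction_on with
    | empty => simp
    | insert i s hi ih =>
      set S := ∑ j ∈ s, Pi.single j (w j)
      have hS : 0 ≤ S := Finset.sum_nonneg fun j _ => Pi.single_nonneg.2 (hw j)
      have step := hf (a + S) (b + S) (add_nonneg ha hS) (add_le_add_left hab S) (w i) (hw i) i
      have hsplit : ∀ c : ι → ℝ, c + (Pi.single i (w i) + S) = c + S + w i • Pi.single i 1 := by
        intro c
        rw [← Pi.single_smul, smul_eq_mul, mul_one]
        abel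
      rw [Finset.sum_insert hi, hsplit, hsplit]
      linarith
  simpa [Finset.univ_sum_single] using key Finset.univ

theorem mul_sub_le_sum_sub (hf : HasDRSubmodularityRatio f β) {κ : Type*} (s : Finset κ)
    {x : ι → ℝ} (hx : 0 ≤ x) {u : κ → ι → ℝ} (hu : ∀ j ∈ s, 0 ≤ u j) :
    β * (f (x + ∑ j ∈ s, u j) - f x) ≤ ∑ j ∈ s, (f (x + u j) - f x) := by
  classical
  induction s using Finset.induction_on with
  | empty => simp
  | insert j s hj ih =>
    have hS : 0 ≤ ∑ i ∈ s, u i := Finset.sum_nonneg fun i hi => hu i (Finset.mem_insert_of_mem hi)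
    have step :=
      hf.mul_sub_le_sub hx (le_add_of_nonneg_right hS) (hu j (Finset.mem_insert_self j s))
    rw [Finset.sum_insert hj, Finset.sum_insert hj, add_comm (u j), ← add_assoc]
    linarith [ih fun i hi => hu i (Finset.mem_insert_of_mem hi)]

theorem mul_sub_le_of_forall_sub_le (hf : HasDRSubmodularityRatio f β) {κ : Type*} [Fintype κ]
    {x : ι → ℝ} (hx : 0 ≤ x) {u : κ → ι → ℝ} (hu : ∀ j, 0 ≤ u j) {δ : ℝ}
    (hδ : ∀ j, f (x + u j) - f x ≤ δ) (k : κ → ℕ) :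
    β * (f (x + ∑ j, (k j : ℝ) • u j) - f x) ≤ (∑ j, k j : ℕ) * δ := by
  let S := Finset.univ.sigma fun j => Finset.range (k j)
  have hsum : ∑ p ∈ S, u p.1 = ∑ j, (k j : ℝ) • u j := by
    simp [S, Finset.sum_sigma, ← Nat.cast_smul_eq_nsmul ℝ]
  calc β * (f (x + ∑ j, (k j : ℝ) • u j) - f x) = β * (f (x + ∑ p ∈ S, u p.1) - f x) := by
        rw [hsum]
    _ ≤ ∑ p ∈ S, (f (x + u p.1) - f x) := hf.mul_sub_le_sum_sub S hx fun p _ => hu p.1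
    _ ≤ ∑ p ∈ S, δ := Finset.sum_le_sum fun p _ => hδ p.1
    _ = (∑ j, k j : ℕ) * δ := by simp [S]

theorem greedy_guarantee (hf : HasDRSubmodularityRatio f β) (hβ0 : 0 ≤ β) {l : ℕ}
    (hβl : β ≤ l) (hf0 : f 0 = 0) (hmono : MonotoneOn f (Set.Ici 0)) {A : Set (ι → ℝ)}
    (hA : ∀ a ∈ A, 0 ≤ a) {x e : ℕ → ι → ℝ} (hx0 : x 0 = 0)
    (hstep : ∀ t < l, e t ∈ A ∧ (∀ e' ∈ A, f (x t + e') ≤ f (x t + e t)) ∧ x (t + 1) = x t + e t)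
    {κ : Type*} [Fintype κ] {u : κ → ι → ℝ} (hu : ∀ j, u j ∈ A) {k : κ → ℕ}
    (hk : ∑ j, k j = l) :
    (1 - Real.exp (-β)) * f (∑ j, (k j : ℝ) • u j) ≤ f (x l) := by
  set y := ∑ j, (k j : ℝ) • u j
  have hy : 0 ≤ y := Finset.sum_nonneg fun j _ => smul_nonneg (Nat.cast_nonneg _) (hA _ (hu j))
  have hx : ∀ t ≤ l, 0 ≤ x t := by
    intro t
    induction t with
    | zero => simp [hx0]
    | succ t ih =>
      intro ht
      obtain ⟨he, -, hxt⟩ := hstep t ht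
      rw [hxt]
      exact add_nonneg (ih (Nat.le_of_succ_le ht)) (hA _ he)
  have hrec : ∀ t < l, f y - f (x (t + 1)) ≤ (1 - β / l) * (f y - f (x t)) := by
    intro t ht
    obtain ⟨-, hgreedy, hxt⟩ := hstep t ht
    have hgain := hf.mul_sub_le_of_forall_sub_le (hx t ht.le) (fun j => hA _ (hu j))
      (δ := f (x (t + 1)) - f (x t)) (fun j => by rw [hxt]; linarith [hgreedy _ (hu j)]) k
    rw [hk] at hgain
    have hmon : f y ≤ f (x t + y) :=
      hmono hy (add_nonneg (hx t ht.le) hy) (le_add_of_nonneg_left (hx t ht.le))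
    have hl : (0 : ℝ) < l := by exact_mod_cast (Nat.zero_le t).trans_lt ht
    have hdiv : β * (f y - f (x t)) / l ≤ f (x (t + 1)) - f (x t) := by
      rw [div_le_iff₀ hl]
      linear_combination hgain + mul_le_mul_of_nonneg_left (sub_le_sub_right hmon (f (x t))) hβ0
    linear_combination hdiv
  have hc : 0 ≤ 1 - β / l := sub_nonneg.2 (div_le_one_of_le₀ hβl (Nat.cast_nonneg l))
  have hgeom := le_geom (u := fun t => f y - f (x t)) hc l hrec
  have hfy : 0 ≤ f y := hf0 ▸ hmono (Set.mem_Ici.2 le_rfl) hy hy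
  have hexp := mul_le_mul_of_nonneg_right (Real.one_sub_div_pow_le_exp_neg hβl) hfy
  simp only [hx0, hf0, sub_zero] at hgeom hexp
  linarith

end HasDRSubmodularityRatio

theorem IsExtreme.sum_smul_mem {𝕜 V : Type*} [Field 𝕜] [LinearOrder 𝕜] [IsStrictOrderedRing 𝕜]
    [AddCommGroup V] [Module 𝕜 V] {A F : Set V} (hF : IsExtreme 𝕜 A F) (hA : Convex 𝕜 A)
    {ι : Type*} [Fintype ι] {v : ι → V} (hv : ∀ i, v i ∈ A) {w : ι → 𝕜} (hw0 : ∀ i, 0 < w i)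
    (hw1 : ∑ i, w i = 1) (hwF : ∑ i, w i • v i ∈ F) (ν : ι → 𝕜) (hν0 : ∀ i, 0 ≤ ν i)
    (hν1 : ∑ i, ν i = 1) : ∑ i, ν i • v i ∈ F := by
  have : Nonempty ι := by
    by_contra h
    simp [not_nonempty_iff.1 h] at hw1
  obtain ⟨ε, hε0, hε1, hεν⟩ : ∃ ε : 𝕜, 0 < ε ∧ ε < 1 ∧ ∀ i, ε * ν i ≤ w i := by
    obtain ⟨i₀, hi₀⟩ := Finite.exists_min w
    have hwi₀ := hw1 ▸ Finset.single_le_sum (fun j _ => (hw0 j).le) (Finset.mem_univ i₀)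
    refine ⟨w i₀ / 2, half_pos (hw0 i₀), by linarith [hw0 i₀], fun i => ?_⟩
    have := hν1 ▸ Finset.single_le_sum (fun j _ => hν0 j) (Finset.mem_univ i)
    nlinarith [hi₀ i, hν0 i, hw0 i₀]
  set r := ∑ i, ((w i - ε * ν i) / (1 - ε)) • v i
  have hr : r ∈ A := by
    refine hA.sum_mem (fun i _ => div_nonneg (sub_nonneg.2 (hεν i)) (sub_pos.2 hε1).le) ?_
      fun i _ => hv i
    rw [← Finset.sum_div, Finset.sum_sub_distrib, hw1, ← Finset.mul_sum, hν1, mul_one,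
      div_self (sub_pos.2 hε1).ne']
  have hsplit : (1 - ε) • r + ε • ∑ i, ν i • v i = ∑ i, w i • v i := by
    simp only [r, Finset.smul_sum, smul_smul, ← Finset.sum_add_distrib, ← add_smul]
    refine Finset.sum_congr rfl fun i _ => ?_
    rw [mul_div_cancel₀ _ (sub_pos.2 hε1).ne', sub_add_cancel]
  exact hF.right_mem_of_mem_openSegment hr (hA.sum_mem (fun i _ => hν0 i) hν1 fun i _ => hv i)
    hwF ⟨1 - ε, ε, sub_pos.2 hε1, hε0, by ring, hsplit⟩

theorem Finset.exists_le_le_sum_eq {ι : Type*} [DecidableEq ι] (s : Finset ι) {a b : ι → ℕ}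
    (hab : ∀ i ∈ s, a i ≤ b i) {N : ℕ} (haN : ∑ i ∈ s, a i ≤ N) (hNb : N ≤ ∑ i ∈ s, b i) :
    ∃ k : ι → ℕ, (∀ i ∈ s, a i ≤ k i ∧ k i ≤ b i) ∧ ∑ i ∈ s, k i = N := by
  induction s using Finset.induction_on generalizing N with
  | empty => exact ⟨0, by simp, by simp at hNb ⊢; omega⟩
  | insert j s hj ih =>
    rw [Finset.sum_insert hj] at haN hNb
    have habj := hab j (Finset.mem_insert_self j s)
    have habs : ∑ i ∈ s, a i ≤ ∑ i ∈ s, b i :=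
      Finset.sum_le_sum fun i hi => hab i (Finset.mem_insert_of_mem hi)
    obtain ⟨k, hk, hks⟩ := ih (fun i hi => hab i (Finset.mem_insert_of_mem hi))
      (N := N - min (b j) (N - ∑ i ∈ s, a i)) (by omega) (by omega)
    refine ⟨Function.update k j (min (b j) (N - ∑ i ∈ s, a i)), fun i hi => ?_, ?_⟩
    · rcases Finset.mem_insert.1 hi with rfl | hi
      · simp only [Function.update_self]
        omega
      · rw [Function.update_of_ne (ne_of_mem_of_not_mem hi hj)]
        exact hk i hi
    · rw [Finset.sum_insert hj, Finset.sum_update_of_notMem hj, Function.update_self, hks]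
      omega

theorem exists_nat_sum_eq_abs_sub_le_one {ι : Type*} [Fintype ι] {a : ι → ℝ} (ha : 0 ≤ a)
    {N : ℕ} (hN : ∑ i, a i = N) : ∃ k : ι → ℕ, ∑ i, k i = N ∧ ∀ i, |(k i : ℝ) - a i| ≤ 1 := by
  classical
  obtain ⟨k, hk, hks⟩ := Finset.univ.exists_le_le_sum_eq (a := fun i => ⌊a i⌋₊)
    (b := fun i => ⌈a i⌉₊) (fun i _ => Nat.floor_le_ceil _) (N := N)
    (by
      rw [← Nat.cast_le (α := ℝ), ← hN]
      push_cast
      exact Finset.sum_le_sum fun i _ => Nat.floor_le (ha i))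
    (by
      rw [← Nat.cast_le (α := ℝ), ← hN]
      push_cast
      exact Finset.sum_le_sum fun i _ => Nat.le_ceil _)
  refine ⟨k, hks, fun i => abs_sub_le_iff.2 ⟨?_, ?_⟩⟩
  · have : (k i : ℝ) ≤ ⌈a i⌉₊ := by exact_mod_cast (hk i (Finset.mem_univ i)).2
    linarith [Nat.ceil_lt_add_one (ha i)]
  · have : (⌊a i⌋₊ : ℝ) ≤ k i := by exact_mod_cast (hk i (Finset.mem_univ i)).1
    linarith [Nat.lt_floor_add_one (a i)]

theorem euclidNorm_sum_smul_le {n : ℕ} {ι : Type*} (s : Finset ι) (c : ι → ℝ)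
    (v : ι → Fin n → ℝ) : euclidNorm (∑ i ∈ s, c i • v i) ≤ ∑ i ∈ s, |c i| * euclidNorm (v i) := by
  have h (x : Fin n → ℝ) : euclidNorm x = ‖WithLp.toLp 2 x‖ := by
    simp [euclidNorm, EuclideanSpace.norm_eq]
  simp only [h, WithLp.toLp_sum, WithLp.toLp_smul]
  exact (norm_sum_le _ _).trans_eq (by simp [norm_smul])

theorem isExtreme_maxFrontier {n : ℕ} {C : Set (Fin n → ℝ)} (hC : Convex ℝ C) :
    IsExtreme ℝ C (maxFrontier C) := by
  refine ⟨fun x hx => hx.1, ?_⟩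
  rintro x₁ hx₁ x₂ hx₂ x ⟨-, hxmax⟩ ⟨a, b, ha, hb, hab, rfl⟩
  refine ⟨hx₁, ?_⟩
  rintro ⟨p, hp, hle, hne⟩
  refine hxmax ⟨a • p + b • x₂, hC hp hx₂ ha.le hb.le hab, ?_, fun h => hne ?_⟩
  · exact add_le_add_left (smul_le_smul_of_nonneg_left hle ha.le) _
  · exact smul_right_injective _ ha.ne' (add_right_cancel h)

theorem mem_maxFrontier_of_subset {n : ℕ} {S T : Set (Fin n → ℝ)} (hST : S ⊆ T)
    {x : Fin n → ℝ} (hxS : x ∈ S) (hxT : x ∈ maxFrontier T) : x ∈ maxFrontier S :=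
  ⟨hxS, fun ⟨y, hy, h⟩ => hxT.2 ⟨y, hST hy, h⟩⟩

theorem exists_grid_point_near_of_mem_maxFrontier {n : ℕ} {E : Set (Fin n → ℝ)} (hfin : E.Finite)
    {xstar : Fin n → ℝ} (hxs : xstar ∈ maxFrontier (convexHull ℝ E)) {D : ℝ} (hD : 0 ≤ D)
    (hDb : ∀ v ∈ E, euclidNorm v ≤ D) {l : ℕ} (hl : 0 < l) :
    ∃ (ι : Type) (_ : Fintype ι) (v : ι → Fin n → ℝ) (k : ι → ℕ),
      (∀ i, v i ∈ maxFrontier E) ∧ ∑ i, k i = l ∧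
      ∑ i, (k i : ℝ) • ((l : ℝ)⁻¹ • v i) ∈ maxFrontier (convexHull ℝ E) ∧
      euclidNorm (xstar - ∑ i, (k i : ℝ) • ((l : ℝ)⁻¹ • v i)) ≤ (maxFrontier E).ncard * D / l := by
  obtain ⟨ι, _, v, w, hvE, hvind, hw0, hw1, rfl⟩ := eq_pos_convex_span_of_mem_convexHull hxs.1
  have hvE' (i : ι) : v i ∈ E := hvE ⟨i, rfl⟩
  have hface := (isExtreme_maxFrontier (convex_convexHull ℝ E)).sum_smul_mem
    (convex_convexHull ℝ E) (fun i => subset_convexHull ℝ E (hvE' i)) hw0 hw1 hxs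
  have hvF (i : ι) : v i ∈ maxFrontier E := by
    classical
    refine mem_maxFrontier_of_subset (subset_convexHull ℝ E) (hvE' i) ?_
    simpa using hface (Pi.single i 1) (fun j => by by_cases h : j = i <;> simp [h]) (by simp)
  have hcard : (Fintype.card ι : ℝ) ≤ (maxFrontier E).ncard := by
    rw [← Nat.card_eq_fintype_card, ← Set.ncard_range_of_injective hvind.injective]
    exact_mod_cast Set.ncard_le_ncard (Set.range_subset_iff.2 hvF) (hfin.subset fun _ h => h.1)
  have hl' : (0 : ℝ) < l := by exact_mod_cast hl
  obtain ⟨k, hks, hk⟩ := exists_nat_sum_eq_abs_sub_le_one (a := fun i => l * w i)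
    (fun i => mul_nonneg hl'.le (hw0 i).le) (N := l) (by simp [← Finset.mul_sum, hw1])
  have hsmul (i : ι) : (k i : ℝ) • ((l : ℝ)⁻¹ • v i) = (k i / l : ℝ) • v i := by
    rw [smul_smul, div_eq_mul_inv]
  refine ⟨ι, inferInstance, v, k, hvF, hks, ?_⟩
  simp only [hsmul]
  refine ⟨hface _ (fun i => by positivity) ?_, ?_⟩
  · rw [← Finset.sum_div, div_eq_one_iff_eq hl'.ne']
    exact_mod_cast hks
  rw [← Finset.sum_sub_distrib]
  simp_rw [← sub_smul]
  calc euclidNorm (∑ i, (w i - k i / l) • v i) ≤ ∑ i, |w i - k i / l| * euclidNorm (v i) :=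
        euclidNorm_sum_smul_le _ _ _
    _ ≤ ∑ _i : ι, 1 / l * D := by
        refine Finset.sum_le_sum fun i _ => mul_le_mul ?_ (hDb _ (hvE' i))
          (Real.sqrt_nonneg _) (by positivity)
        rw [show w i - k i / l = (l * w i - k i) / l by field_simp, abs_div, abs_of_pos hl',
          abs_sub_comm]
        exact div_le_div_of_nonneg_right (hk i) hl'.le
    _ = Fintype.card ι * D / l := by simp [div_eq_mul_inv]; ring
    _ ≤ (maxFrontier E).ncard * D / l := by gcongr

theorem stmt_8_general {n : ℕ} (E : Set (Fin n → ℝ)) (hfin : E.Finite)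
    (hpos : ∀ v ∈ E, 0 ≤ v)
    (l : ℕ) (hl : 0 < l)
    (m : ℕ) (hm : m = (maxFrontier E).ncard)
    (β : ℝ) (hβ0 : 0 < β) (hβ1 : β ≤ 1)
    (f : (Fin n → ℝ) → ℝ) (hf0 : f 0 = 0)
    (hmono : ∀ x y : Fin n → ℝ, 0 ≤ x → x ≤ y → f x ≤ f y)
    (hDR : ∀ x y : Fin n → ℝ, 0 ≤ x → x ≤ y → ∀ k : ℝ, 0 ≤ k → ∀ i : Fin n,
      f (x + k • (Pi.single i 1 : Fin n → ℝ)) - f x ≥ β * (f (y + k • (Pi.single i 1 : Fin n → ℝ)) - f y))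
    (L : ℝ) (hL : 0 ≤ L)
    (hLip : ∀ x ∈ maxFrontier (convexHull ℝ E), ∀ y ∈ maxFrontier (convexHull ℝ E),
      |f x - f y| ≤ L * euclidNorm (x - y))
    (D : ℝ) (hD : 0 ≤ D) (hDb : ∀ x ∈ convexHull ℝ E, euclidNorm x ≤ D)
    (xstar : Fin n → ℝ) (hxs : xstar ∈ maxFrontier (convexHull ℝ E))
    (x : ℕ → Fin n → ℝ) (hx0 : x 0 = 0)
    (e : ℕ → Fin n → ℝ)
    (hstep : ∀ t < l,
      e t ∈ (fun v : Fin n → ℝ => (l : ℝ)⁻¹ • v) '' maxFrontier E ∧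
      (∀ e' ∈ (fun v : Fin n → ℝ => (l : ℝ)⁻¹ • v) '' maxFrontier E,
        f (x t + e') ≤ f (x t + e t)) ∧
      x (t + 1) = x t + e t) :
    f (x l) ≥ (1 - Real.exp (-β)) * f xstar
      - (1 - Real.exp (-β)) * m * D * L / l := by
  obtain ⟨ι, _, v, k, hvF, hks, hyF, hdist⟩ := exists_grid_point_near_of_mem_maxFrontier hfin hxs
    hD (fun v hv => hDb v (subset_convexHull ℝ E hv)) hl
  have hA : ∀ a ∈ (fun v : Fin n → ℝ => (l : ℝ)⁻¹ • v) '' maxFrontier E, 0 ≤ a := by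
    rintro _ ⟨u, hu, rfl⟩
    exact smul_nonneg (by positivity) (hpos u hu.1)
  have hgreedy := HasDRSubmodularityRatio.greedy_guarantee hDR hβ0.le
    (hβ1.trans (by exact_mod_cast hl)) hf0 (fun a ha b _ hab => hmono a b ha hab) hA hx0 hstep
    (fun i => ⟨v i, hvF i, rfl⟩) hks
  beta_reduce at hgreedy
  subst hm
  have hfy : f xstar - (maxFrontier E).ncard * D * L / l
      ≤ f (∑ i, (k i : ℝ) • ((l : ℝ)⁻¹ • v i)) := by
    linear_combination (le_abs_self _).trans ((hLip xstar hxs _ hyF).trans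
      (mul_le_mul_of_nonneg_left hdist hL))
  have hexp : 0 ≤ 1 - Real.exp (-β) := sub_nonneg.2 (Real.exp_le_one_iff.2 (by linarith))
  linear_combination mul_le_mul_of_nonneg_left hfy hexp + hgreedy

/-- Theorem 1: guarantee of the LDGM greedy iteration. -/
theorem stmt_8 {n : ℕ} (E : Set (Fin n → ℝ)) (hfin : E.Finite) (hne : E.Nonempty)
    (hpos : ∀ v ∈ E, 0 ≤ v)
    (l : ℕ) (hl : 0 < l)
    (m : ℕ) (hm : m = (maxFrontier E).ncard)
    (β : ℝ) (hβ0 : 0 < β) (hβ1 : β ≤ 1)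
    (f : (Fin n → ℝ) → ℝ) (hf0 : f 0 = 0)
    (hmono : ∀ x y : Fin n → ℝ, 0 ≤ x → x ≤ y → f x ≤ f y)
    (hDR : ∀ x y : Fin n → ℝ, 0 ≤ x → x ≤ y → ∀ k : ℝ, 0 ≤ k → ∀ i : Fin n,
      f (x + k • (Pi.single i 1 : Fin n → ℝ)) - f x ≥ β * (f (y + k • (Pi.single i 1 : Fin n → ℝ)) - f y))
    (L : ℝ) (hL : 0 ≤ L)
    (hLip : ∀ x ∈ maxFrontier (convexHull ℝ E), ∀ y ∈ maxFrontier (convexHull ℝ E),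
      |f x - f y| ≤ L * euclidNorm (x - y))
    (D : ℝ) (hD : 0 ≤ D) (hDb : ∀ x ∈ convexHull ℝ E, euclidNorm x ≤ D)
    (xstar : Fin n → ℝ) (hxs : xstar ∈ maxFrontier (convexHull ℝ E))
    (hopt : ∀ y ∈ convexHull ℝ E, f y ≤ f xstar)
    (x : ℕ → Fin n → ℝ) (hx0 : x 0 = 0)
    (e : ℕ → Fin n → ℝ)
    (hstep : ∀ t < l,
      e t ∈ (fun v : Fin n → ℝ => (l : ℝ)⁻¹ • v) '' maxFrontier E ∧
      (∀ e' ∈ (fun v : Fin n → ℝ => (l : ℝ)⁻¹ • v) '' maxFrontier E,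
        f (x t + e') ≤ f (x t + e t)) ∧
      x (t + 1) = x t + e t) :
    f (x l) ≥ (1 - Real.exp (-β)) * f xstar
      - (1 - Real.exp (-β)) * m * D * L / l :=
  stmt_8_general E hfin hpos l hl m hm β hβ0 hβ1 f hf0 hmono hDR L hL hLip D hD hDb xstar hxs x hx0
    e hstep
end

section
/- (Lemma 9, greedy step of modified LDGM under a box constraint) Let f : ℝ^n → ℝ be monotone on the nonnegative orthant with DR-submodularity ratio at least β, where 0 < β ≤ 1. Let s_1, …, s_n > 0 and set 𝓔 = {s_i·χ_i : i ∈ {1, …, n}}. Let c ∈ ℝ^n with c ≥ 0 and C = {z ∈ ℝ^n : 0 ≤ z ≤ c}. Let l be a positive integer, let k_1, …, k_n ∈ ℕ with k_1 + ⋯ + k_n = l, and set v* = Σ_i k_i·s_i·χ_i; assume v* ∈ C. Let t_1, …, t_n ∈ ℕ, set x = Σ_i t_i·s_i·χ_i, and assume x ∈ C. Suppose e* ∈ 𝓔 satisfies x + e* ∈ C and f(x + e*) ≥ f(x + e) for every e ∈ 𝓔 with x + e ∈ C. Then f(x + e*) − f(x) ≥ (β/l)·(f(v*) − f(x)). -/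
/-!
Let `Δ = f (x + e*) - f x`. If `t i < k i`, then `x i + s i ≤ v* i ≤ c i`, so the step `s i χ_i` is
feasible and by greediness gains at most `Δ` at `x`; by the DR-submodularity ratio the same step gains at
most `Δ / β` at any point above `x`. Climbing from `x` to `x + Σ (k i - t i)⁺ s i χ_i ≥ v*` takes at most
`l` such steps, so monotonicity gives `f v* - f x ≤ l Δ / β`.
-/

open Finset

section

variable {ι : Type*} [DecidableEq ι]

lemma Pi.smul_single_one {R : Type*} [Semiring R] (a : R) (i : ι) :
    a • (Pi.single i 1 : ι → R) = Pi.single i a := by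
  rw [← Pi.single_smul', smul_eq_mul, mul_one]

lemma add_single_le {α : Type*} [AddMonoid α] [Preorder α] {x c : ι → α} {i : ι} {a : α}
    (hx : x ≤ c) (hi : x i + a ≤ c i) : x + Pi.single i a ≤ c := by
  intro j
  rcases eq_or_ne j i with rfl | hj
  · simpa using hi
  · simpa [hj] using hx j

lemma natCast_mul_add_single_le {s c : ι → ℝ} {t k : ι → ℕ} {i : ι} (hs : 0 ≤ s i)
    (htc : (fun j ↦ (t j : ℝ) * s j) ≤ c) (hkc : (fun j ↦ (k j : ℝ) * s j) ≤ c) (hi : t i < k i) :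
    (fun j ↦ (t j : ℝ) * s j) + Pi.single i (s i) ≤ c :=
  add_single_le htc <| calc
    t i * s i + s i = (t i + 1 : ℕ) * s i := by push_cast; ring
    _ ≤ k i * s i := by gcongr; exact hi
    _ ≤ c i := hkc i

/-- `Pi.single i k` is the paper's `k • χ_i`. -/
def HasDRRatio (β : ℝ) (f : (ι → ℝ) → ℝ) : Prop :=
  ∀ ⦃x y : ι → ℝ⦄, 0 ≤ x → x ≤ y → ∀ (i : ι) ⦃k : ℝ⦄, 0 ≤ k →
    β * (f (y + Pi.single i k) - f y) ≤ f (x + Pi.single i k) - f x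

namespace HasDRRatio

variable {β : ℝ} {f : (ι → ℝ) → ℝ}

lemma mul_sub_single_natCast_mul_le (hf : HasDRRatio β f) {x y : ι → ℝ} (hx : 0 ≤ x)
    (hxy : x ≤ y) (i : ι) {a : ℝ} (ha : 0 ≤ a) (m : ℕ) :
    β * (f (y + Pi.single i (m * a)) - f y) ≤ m * (f (x + Pi.single i a) - f x) := by
  induction m with
  | zero => simp
  | succ m ih =>
    have hstep : x ≤ y + Pi.single i (m * a) :=
      le_add_of_le_of_nonneg hxy (Pi.single_nonneg.2 (by positivity))
    have hlast := hf hx hstep i ha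
    rw [add_assoc, ← Pi.single_add] at hlast
    rw [Nat.cast_succ, add_one_mul]
    linarith

lemma mul_sub_add_sum_single_le (hf : HasDRRatio β f) {x s : ι → ℝ} (hx : 0 ≤ x) (hs : 0 ≤ s)
    (d : ι → ℕ) {D : ℝ} (S : Finset ι) (hD : ∀ i ∈ S, d i ≠ 0 → f (x + Pi.single i (s i)) - f x ≤ D) :
    β * (f (x + ∑ i ∈ S, Pi.single i (d i * s i)) - f x) ≤ (∑ i ∈ S, (d i : ℝ)) * D := by
  induction S using Finset.induction_on with
  | empty => simp
  | insert a S ha ih =>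
    set y := x + ∑ i ∈ S, Pi.single i (d i * s i)
    have hxy : x ≤ y := le_add_of_nonneg_right <|
      sum_nonneg fun i _ ↦ Pi.single_nonneg.2 (mul_nonneg (Nat.cast_nonneg _) (hs i))
    have hlast : β * (f (y + Pi.single a (d a * s a)) - f y) ≤ d a * D := by
      refine (hf.mul_sub_single_natCast_mul_le hx hxy a (hs a) (d a)).trans ?_
      rcases eq_or_ne (d a) 0 with h | h
      · simp [h]
      · exact mul_le_mul_of_nonneg_left (hD a (mem_insert_self a S) h) (Nat.cast_nonneg _)
    have hS := ih fun i hi ↦ hD i (mem_insert_of_mem hi)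
    rw [sum_insert ha, sum_insert ha, add_comm (Pi.single a _), ← add_assoc]
    linarith

lemma mul_sub_add_le [Fintype ι] (hf : HasDRRatio β f) {x s : ι → ℝ} (hx : 0 ≤ x) (hs : 0 ≤ s)
    (d : ι → ℕ) {D : ℝ} (hD : ∀ i, d i ≠ 0 → f (x + Pi.single i (s i)) - f x ≤ D) :
    β * (f (x + fun i ↦ d i * s i) - f x) ≤ (∑ i, (d i : ℝ)) * D := by
  simpa only [univ_sum_single] using hf.mul_sub_add_sum_single_le hx hs d univ fun i _ ↦ hD i

end HasDRRatio

end

theorem stmt_16_general {n : ℕ} (f : (Fin n → ℝ) → ℝ) (β : ℝ) (hβ0 : 0 < β)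
    (hmono : ∀ x y : Fin n → ℝ, 0 ≤ x → x ≤ y → f x ≤ f y)
    (hDR : ∀ x y : Fin n → ℝ, 0 ≤ x → x ≤ y → ∀ k : ℝ, 0 ≤ k → ∀ i : Fin n,
      f (x + k • (Pi.single i 1 : Fin n → ℝ)) - f x ≥ β * (f (y + k • (Pi.single i 1 : Fin n → ℝ)) - f y))
    (s : Fin n → ℝ) (hs : ∀ i, 0 < s i)
    (c : Fin n → ℝ)
    (l : ℕ)
    (k : Fin n → ℕ) (hk : ∑ i, k i = l)
    (vstar : Fin n → ℝ) (hv : vstar = ∑ i, ((k i : ℝ) * s i) • (Pi.single i 1 : Fin n → ℝ))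
    (hvC : 0 ≤ vstar ∧ vstar ≤ c)
    (t : Fin n → ℕ) (x : Fin n → ℝ)
    (hx : x = ∑ i, ((t i : ℝ) * s i) • (Pi.single i 1 : Fin n → ℝ))
    (hxC : 0 ≤ x ∧ x ≤ c)
    (estar : Fin n → ℝ) (hestar : ∃ i : Fin n, estar = s i • (Pi.single i 1 : Fin n → ℝ))
    (hbest : ∀ i : Fin n, 0 ≤ x + s i • (Pi.single i 1 : Fin n → ℝ) → x + s i • (Pi.single i 1 : Fin n → ℝ) ≤ c →
      f (x + s i • (Pi.single i 1 : Fin n → ℝ)) ≤ f (x + estar)) :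
    f (x + estar) - f x ≥ (β / l) * (f vstar - f x) := by
  obtain ⟨i₀, rfl⟩ := hestar
  simp only [Pi.smul_single_one, univ_sum_single] at hv hx hbest ⊢
  have hf : HasDRRatio β f := fun x y hx hxy i k hk ↦ by
    simpa only [Pi.smul_single_one] using hDR x y hx hxy k hk i
  set D := f (x + Pi.single i₀ (s i₀)) - f x
  have hD : 0 ≤ D :=
    sub_nonneg.2 (hmono _ _ hxC.1 (le_add_of_nonneg_right (Pi.single_nonneg.2 (hs i₀).le)))
  have hgain : ∀ i, k i - t i ≠ 0 → f (x + Pi.single i (s i)) - f x ≤ D := by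
    intro i hi
    have hfeas : x + Pi.single i (s i) ≤ c :=
      hx ▸ natCast_mul_add_single_le (hs i).le (hx ▸ hxC.2) (hv ▸ hvC.2) (by omega)
    linarith [hbest i (le_add_of_le_of_nonneg hxC.1 (Pi.single_nonneg.2 (hs i).le)) hfeas]
  have hvz : vstar ≤ x + fun i ↦ ((k i - t i : ℕ) : ℝ) * s i := fun i ↦ by
    simp only [hv, hx, Pi.add_apply]
    rw [← add_mul, ← Nat.cast_add]
    gcongr
    exacts [(hs i).le, by omega]
  have hN : ∑ i, ((k i - t i : ℕ) : ℝ) ≤ l := by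
    rw [← hk, Nat.cast_sum]
    gcongr
    omega
  rw [ge_iff_le, div_mul_eq_mul_div]
  refine div_le_of_le_mul₀ (Nat.cast_nonneg _) hD ?_
  calc β * (f vstar - f x) ≤ β * (f (x + fun i ↦ ((k i - t i : ℕ) : ℝ) * s i) - f x) := by
        gcongr
        exact hmono _ _ hvC.1 hvz
    _ ≤ (∑ i, ((k i - t i : ℕ) : ℝ)) * D := hf.mul_sub_add_le hxC.1 (fun i ↦ (hs i).le) _ hgain
    _ ≤ D * l := by rw [mul_comm]; gcongr

/-- Lemma 9: greedy step of modified LDGM under a box constraint. -/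
theorem stmt_16 {n : ℕ} (f : (Fin n → ℝ) → ℝ) (β : ℝ) (hβ0 : 0 < β) (hβ1 : β ≤ 1)
    (hmono : ∀ x y : Fin n → ℝ, 0 ≤ x → x ≤ y → f x ≤ f y)
    (hDR : ∀ x y : Fin n → ℝ, 0 ≤ x → x ≤ y → ∀ k : ℝ, 0 ≤ k → ∀ i : Fin n,
      f (x + k • (Pi.single i 1 : Fin n → ℝ)) - f x ≥ β * (f (y + k • (Pi.single i 1 : Fin n → ℝ)) - f y))
    (s : Fin n → ℝ) (hs : ∀ i, 0 < s i)
    (c : Fin n → ℝ) (hc : 0 ≤ c)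
    (l : ℕ) (hl : 0 < l)
    (k : Fin n → ℕ) (hk : ∑ i, k i = l)
    (vstar : Fin n → ℝ) (hv : vstar = ∑ i, ((k i : ℝ) * s i) • (Pi.single i 1 : Fin n → ℝ))
    (hvC : 0 ≤ vstar ∧ vstar ≤ c)
    (t : Fin n → ℕ) (x : Fin n → ℝ)
    (hx : x = ∑ i, ((t i : ℝ) * s i) • (Pi.single i 1 : Fin n → ℝ))
    (hxC : 0 ≤ x ∧ x ≤ c)
    (estar : Fin n → ℝ) (hestar : ∃ i : Fin n, estar = s i • (Pi.single i 1 : Fin n → ℝ))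
    (hfeas : 0 ≤ x + estar ∧ x + estar ≤ c)
    (hbest : ∀ i : Fin n, 0 ≤ x + s i • (Pi.single i 1 : Fin n → ℝ) → x + s i • (Pi.single i 1 : Fin n → ℝ) ≤ c →
      f (x + s i • (Pi.single i 1 : Fin n → ℝ)) ≤ f (x + estar)) :
    f (x + estar) - f x ≥ (β / l) * (f vstar - f x) :=
  stmt_16_general f β hβ0 hmono hDR s hs c l k hk vstar hv hvC t x hx hxC estar hestar hbest
end
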